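/- For every n ≥ 1, there exists an NFA with exactly n + 4 states over the alphabet Σ_n = {1, 2, …, n} (allowing a set of start states, or equivalently accepting M_n as a union of the languages of two NFAs) that accepts the language M_n = M'_n ∪ M''_n. -/

import Mathlib

/-!
`M_n` is the union of two NFA languages. Odd length is recognised by the two-state parity
automaton. `M''_n` is recognised with `n + 2` states: an idle state guesses that the current
letter `i` opens the pair and moves to a state remembering `i`, which survives only smaller
letters and reaches an accepting sink on the next `i`. The disjoint union has `n + 4` states.
-/

/-- The language `M''_n` over a linearly ordered alphabet: all words containing two
occurrences of some letter `i` with only letters strictly smaller than `i`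
in between. -/
def Mpp {α : Type*} [LT α] : Set (List α) :=
  { u | ∃ (x y z : List α) (i : α), u = x ++ i :: (y ++ i :: z) ∧ ∀ c ∈ y, c < i }

namespace NFA

variable {α σ τ σ₁ σ₂ : Type*}

theorem mem_acceptsFrom_iff_exists_singleton {M : NFA α σ} {S : Set σ} {x : List α} :
    x ∈ M.acceptsFrom S ↔ ∃ s ∈ S, x ∈ M.acceptsFrom {s} := by
  simp only [mem_acceptsFrom, mem_evalFrom_iff_exists (S := S)]
  exact ⟨fun ⟨t, ht, s, hs, h⟩ => ⟨s, hs, t, ht, h⟩, fun ⟨s, hs, t, ht, h⟩ => ⟨t, ht, s, hs, h⟩⟩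

theorem nil_mem_acceptsFrom_singleton {M : NFA α σ} {s : σ} :
    [] ∈ M.acceptsFrom {s} ↔ s ∈ M.accept := by
  simp [nil_mem_acceptsFrom]

theorem cons_mem_acceptsFrom_singleton {M : NFA α σ} {s : σ} {a : α} {x : List α} :
    a :: x ∈ M.acceptsFrom {s} ↔ ∃ t ∈ M.step s a, x ∈ M.acceptsFrom {t} := by
  rw [cons_mem_acceptsFrom, stepSet_singleton, mem_acceptsFrom_iff_exists_singleton]

theorem evalFrom_image {M : NFA α σ} {N : NFA α τ} (f : σ → τ)
    (hstep : ∀ s a, N.step (f s) a = f '' M.step s a) (S : Set σ) (x : List α) :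
    N.evalFrom (f '' S) x = f '' M.evalFrom S x := by
  induction x generalizing S with
  | nil => rfl
  | cons a x ih =>
    have : N.stepSet (f '' S) a = f '' M.stepSet S a := by
      simp only [stepSet, Set.biUnion_image, hstep, Set.image_iUnion₂]
    rw [evalFrom_cons, evalFrom_cons, this, ih]

theorem acceptsFrom_image {M : NFA α σ} {N : NFA α τ} (f : σ → τ)
    (hstep : ∀ s a, N.step (f s) a = f '' M.step s a) (haccept : f ⁻¹' N.accept = M.accept)
    (S : Set σ) : N.acceptsFrom (f '' S) = M.acceptsFrom S := by
  ext x
  simp only [mem_acceptsFrom, evalFrom_image f hstep, ← haccept, Set.mem_preimage]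
  constructor
  · rintro ⟨_, hacc, s, hs, rfl⟩
    exact ⟨s, hacc, hs⟩
  · rintro ⟨s, hacc, hs⟩
    exact ⟨f s, hacc, s, hs, rfl⟩

def reindex (g : σ ≃ τ) (M : NFA α σ) : NFA α τ where
  step t a := g '' M.step (g.symm t) a
  start := g '' M.start
  accept := g '' M.accept

theorem accepts_reindex (g : σ ≃ τ) (M : NFA α σ) : (M.reindex g).accepts = M.accepts :=
  acceptsFrom_image g (fun s a => by simp [reindex]) (g.preimage_image M.accept) M.start

def sum (M₁ : NFA α σ₁) (M₂ : NFA α σ₂) : NFA α (σ₁ ⊕ σ₂) where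
  step := Sum.elim (fun s a => Sum.inl '' M₁.step s a) (fun s a => Sum.inr '' M₂.step s a)
  start := Sum.inl '' M₁.start ∪ Sum.inr '' M₂.start
  accept := Sum.inl '' M₁.accept ∪ Sum.inr '' M₂.accept

theorem accepts_sum (M₁ : NFA α σ₁) (M₂ : NFA α σ₂) :
    (M₁.sum M₂).accepts = M₁.accepts + M₂.accepts := by
  show (M₁.sum M₂).acceptsFrom (_ ∪ _) = M₁.acceptsFrom M₁.start + M₂.acceptsFrom M₂.start
  rw [acceptsFrom_union, acceptsFrom_image _ (fun _ _ => rfl) (by ext; simp [sum]),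
    acceptsFrom_image _ (fun _ _ => rfl) (by ext; simp [sum])]

end NFA

def parityDFA (α : Type*) : DFA α (ZMod 2) where
  step s _ := s + 1
  start := 0
  accept := {1}

theorem parityDFA_evalFrom {α : Type*} (s : ZMod 2) (x : List α) :
    (parityDFA α).evalFrom s x = s + x.length := by
  induction x generalizing s with
  | nil => simp
  | cons a x ih =>
    rw [DFA.evalFrom_cons, ih, List.length_cons, Nat.cast_succ]
    show s + 1 + _ = _
    ring

theorem mem_parityDFA_accepts {α : Type*} {x : List α} :
    x ∈ (parityDFA α).accepts ↔ Odd x.length := by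
  rw [DFA.mem_accepts, DFA.eval, parityDFA_evalFrom, ← ZMod.natCast_eq_one_iff_odd]
  show (0 : ZMod 2) + _ = 1 ↔ _
  rw [zero_add]

section Mpp

variable {α : Type*} [LT α]

def closing (i : α) : Set (List α) :=
  { u | ∃ y z : List α, u = y ++ i :: z ∧ ∀ c ∈ y, c < i }

theorem nil_notMem_closing (i : α) : [] ∉ closing i := by
  rintro ⟨y, z, h, -⟩
  simp at h

theorem cons_mem_closing {i a : α} {w : List α} :
    a :: w ∈ closing i ↔ a = i ∨ a < i ∧ w ∈ closing i := by
  constructor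
  · rintro ⟨_ | ⟨c, y⟩, z, h, hy⟩
    · exact Or.inl (List.cons_eq_cons.mp h).1
    · obtain ⟨rfl, rfl⟩ := List.cons_eq_cons.mp h
      exact Or.inr ⟨hy a List.mem_cons_self, y, z, rfl,
        fun c hc => hy c (List.mem_cons_of_mem a hc)⟩
  · rintro (rfl | ⟨ha, y, z, rfl, hy⟩)
    · exact ⟨[], w, rfl, by simp⟩
    · exact ⟨a :: y, z, rfl, List.forall_mem_cons.mpr ⟨ha, hy⟩⟩

theorem nil_notMem_Mpp : ([] : List α) ∉ Mpp := by
  rintro ⟨x, y, z, i, h, -⟩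
  simp at h

theorem cons_mem_Mpp {a : α} {w : List α} : a :: w ∈ Mpp ↔ w ∈ closing a ∨ w ∈ Mpp := by
  constructor
  · rintro ⟨_ | ⟨c, x⟩, y, z, i, h, hy⟩
    · obtain ⟨rfl, rfl⟩ := List.cons_eq_cons.mp h
      exact Or.inl ⟨y, z, rfl, hy⟩
    · obtain ⟨rfl, rfl⟩ := List.cons_eq_cons.mp h
      exact Or.inr ⟨x, y, z, i, rfl, hy⟩
  · rintro (⟨y, z, rfl, hy⟩ | ⟨x, y, z, i, rfl, hy⟩)
    · exact ⟨[], y, z, a, rfl, hy⟩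
    · exact ⟨a :: x, y, z, i, rfl, hy⟩

variable (α) in
/-- `inr false` is the idle start state, `inl i` records an opening `i` followed only by smaller
letters, and `inr true` is the accepting sink. -/
def mppNFA : NFA α (α ⊕ Bool) where
  step
    | .inl i, a => {q | a = i ∧ q = .inr true ∨ a < i ∧ q = .inl i}
    | .inr false, a => {.inl a, .inr false}
    | .inr true, _ => {.inr true}
  start := {.inr false}
  accept := {.inr true}

def mppStateLanguage : α ⊕ Bool → Set (List α)
  | .inl i => closing i
  | .inr false => Mpp
  | .inr true => Set.univ

theorem mem_mppNFA_acceptsFrom {q : α ⊕ Bool} {w : List α} :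
    w ∈ (mppNFA α).acceptsFrom {q} ↔ w ∈ mppStateLanguage q := by
  induction w generalizing q with
  | nil =>
    rw [NFA.nil_mem_acceptsFrom_singleton]
    rcases q with i | _ | _ <;>
      simp [mppNFA, mppStateLanguage, nil_notMem_closing, nil_notMem_Mpp]
  | cons a w ih =>
    simp only [NFA.cons_mem_acceptsFrom_singleton, ih]
    rcases q with i | _ | _ <;>
      simp [mppNFA, mppStateLanguage, cons_mem_closing, cons_mem_Mpp, or_comm]

theorem mem_mppNFA_accepts {w : List α} : w ∈ (mppNFA α).accepts ↔ w ∈ Mpp :=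
  mem_mppNFA_acceptsFrom

end Mpp

theorem stmt_10_general (n : ℕ) :
    ∃ B : NFA (Fin n) (Fin (n + 4)),
      ∀ w : List (Fin n),
        w ∈ B.accepts ↔ (Odd w.length ∨ w ∈ (Mpp : Set (List (Fin n)))) := by
  have hcard : Fintype.card (ZMod 2 ⊕ (Fin n ⊕ Bool)) = n + 4 := by
    simp only [Fintype.card_sum, ZMod.card, Fintype.card_fin, Fintype.card_bool]
    omega
  refine ⟨((parityDFA (Fin n)).toNFA.sum (mppNFA (Fin n))).reindex
    (Fintype.equivFinOfCardEq hcard), fun w => ?_⟩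
  rw [NFA.accepts_reindex, NFA.accepts_sum, Language.mem_add, DFA.toNFA_correct,
    mem_parityDFA_accepts, mem_mppNFA_accepts]

/-- There is an NFA with exactly `n + 4` states (with a set of start states) over
the `n`-letter ordered alphabet that accepts `M_n = M'_n ∪ M''_n`. -/
theorem stmt_10 (n : ℕ) (hn : 1 ≤ n) :
    ∃ B : NFA (Fin n) (Fin (n + 4)),
      ∀ w : List (Fin n),
        w ∈ B.accepts ↔ (Odd w.length ∨ w ∈ (Mpp : Set (List (Fin n)))) :=
  stmt_10_general n
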